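/- For a smooth solution of the system D_t u_a + 𝒯∇_a p = (∇_a u_c)u^c in Lagrangian coordinates, the vorticity two-form satisfies the evolution equation D_t(curl u)_{ab} = (∇_b 𝒯)(∇_a p) - (∇_a 𝒯)(∇_b p), where (curl u)_{ab} = ∇_a u_b - ∇_b u_a. -/

import Mathlib

noncomputable section

/-- `(0,r)`-tensor fields on `ℝⁿ` (in Lagrangian coordinates). -/
abbrev Tens (n r : ℕ) := (Fin n → ℝ) → (Fin r → Fin n) → ℝ

/-- Partial derivative in the `a`-th coordinate direction. -/
def pd {n : ℕ} (a : Fin n) (f : (Fin n → ℝ) → ℝ) (y : Fin n → ℝ) : ℝ :=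
  fderiv ℝ f y (Pi.single a 1)

/-- Christoffel symbols `Γ^c_{ab}` of a (time-dependent) metric `g`. -/
def Gamma {n : ℕ} (g : ℝ → (Fin n → ℝ) → Matrix (Fin n) (Fin n) ℝ) (t : ℝ)
    (y : Fin n → ℝ) (c a b : Fin n) : ℝ :=
  (1 / 2) * ∑ d, (g t y)⁻¹ c d *
    (pd a (fun z => g t z b d) y + pd b (fun z => g t z a d) y -
      pd d (fun z => g t z a b) y)

/-- Covariant derivative of a `(0,r)` tensor: the new (covariant) index comes first. -/
def covD {n : ℕ} (g : ℝ → (Fin n → ℝ) → Matrix (Fin n) (Fin n) ℝ) (t : ℝ) {r : ℕ}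
    (w : Tens n r) : Tens n (r + 1) :=
  fun y J =>
    pd (J 0) (fun z => w z (Fin.tail J)) y -
      ∑ m : Fin r, ∑ e : Fin n,
        Gamma g t y e (J 0) (Fin.tail J m) * w y (Function.update (Fin.tail J) m e)

/-- The metric `g_{ab} = δ_{ij} (∂x^i/∂y^a)(∂x^j/∂y^b)` induced by the flow map `x`. -/
def gmat {n : ℕ} (x : ℝ → (Fin n → ℝ) → (Fin n → ℝ)) (t : ℝ) (y : Fin n → ℝ) :
    Matrix (Fin n) (Fin n) ℝ :=
  Matrix.of fun a b => ∑ i, pd a (fun z => x t z i) y * pd b (fun z => x t z i) y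

/-- The Lagrangian velocity one-form `u_a = (∂x^j/∂y^a) v_j(t, x(t,y))`. -/
def uLag {n : ℕ} (x v : ℝ → (Fin n → ℝ) → (Fin n → ℝ)) (t : ℝ) (y : Fin n → ℝ)
    (a : Fin n) : ℝ :=
  ∑ j, pd a (fun z => x t z j) y * v t (x t y) j

/-- `u` as a `(0,1)` tensor. -/
def uT {n : ℕ} (x v : ℝ → (Fin n → ℝ) → (Fin n → ℝ)) (t : ℝ) : Tens n 1 :=
  fun y I => uLag x v t y (I 0)

/-- The deformation tensor `h_{ab} = (∇_a u_b + ∇_b u_a)/2`. -/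
def hT {n : ℕ} (x v : ℝ → (Fin n → ℝ) → (Fin n → ℝ)) (t : ℝ) (y : Fin n → ℝ)
    (a b : Fin n) : ℝ :=
  (covD (gmat x) t (uT x v t) y ![a, b] + covD (gmat x) t (uT x v t) y ![b, a]) / 2

/-- `div u = g^{ab} ∇_a u_b`. -/
def divu {n : ℕ} (x v : ℝ → (Fin n → ℝ) → (Fin n → ℝ)) (t : ℝ) (y : Fin n → ℝ) : ℝ :=
  ∑ a, ∑ b, (gmat x t y)⁻¹ a b * covD (gmat x) t (uT x v t) y ![a, b]


/-- A scalar as a `(0,0)` tensor. -/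
def scalT {n : ℕ} (f : (Fin n → ℝ) → ℝ) : Tens n 0 := fun y _ => f y

section infra
variable {n : ℕ}

lemma pd_congr {a : Fin n} {f g : (Fin n → ℝ) → ℝ} (h : ∀ z, f z = g z) (y : Fin n → ℝ) :
    pd a f y = pd a g y := by rw [show f = g from funext h]

lemma pd_add {a : Fin n} {f g : (Fin n → ℝ) → ℝ} {y} (hf : DifferentiableAt ℝ f y)
    (hg : DifferentiableAt ℝ g y) : pd a (fun z => f z + g z) y = pd a f y + pd a g y := by
  simp [pd, fderiv_fun_add hf hg]

lemma pd_mul {a : Fin n} {f g : (Fin n → ℝ) → ℝ} {y} (hf : DifferentiableAt ℝ f y)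
    (hg : DifferentiableAt ℝ g y) :
    pd a (fun z => f z * g z) y = pd a f y * g y + f y * pd a g y := by
  simp [pd, fderiv_fun_mul hf hg]; ring

lemma pd_const_mul {a : Fin n} {f : (Fin n → ℝ) → ℝ} {y} {c : ℝ}
    (hf : DifferentiableAt ℝ f y) :
    pd a (fun z => c * f z) y = c * pd a f y := by
  unfold pd
  rw [fderiv_const_mul hf c]
  simp

lemma pd_sum {a : Fin n} {ι : Type*} (s : Finset ι) {f : ι → (Fin n → ℝ) → ℝ} {y}
    (hf : ∀ i ∈ s, DifferentiableAt ℝ (f i) y) :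
    pd a (fun z => ∑ i ∈ s, f i z) y = ∑ i ∈ s, pd a (f i) y := by
  unfold pd
  rw [fderiv_fun_sum hf]
  simp

-- joint spatial derivative
def PDa (a : Fin n) (F : ℝ × (Fin n → ℝ) → ℝ) : ℝ × (Fin n → ℝ) → ℝ :=
  fun q => fderiv ℝ F q (0, Pi.single a 1)

def DT (F : ℝ × (Fin n → ℝ) → ℝ) : ℝ × (Fin n → ℝ) → ℝ :=
  fun q => fderiv ℝ F q (1, 0)

lemma pd_eq_PDa {a : Fin n} {F : ℝ × (Fin n → ℝ) → ℝ} {s : ℝ} {y : Fin n → ℝ}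
    (hF : DifferentiableAt ℝ F (s, y)) :
    pd a (fun z => F (s, z)) y = PDa a F (s, y) := by
  have h : HasFDerivAt (fun z => F (s, z))
      ((fderiv ℝ F (s, y)).comp (ContinuousLinearMap.inr ℝ ℝ (Fin n → ℝ))) y :=
    hF.hasFDerivAt.comp y (hasFDerivAt_prodMk_right s y)
  simp [pd, PDa, h.fderiv]

lemma deriv_eq_DT {F : ℝ × (Fin n → ℝ) → ℝ} {s : ℝ} {y : Fin n → ℝ}
    (hF : DifferentiableAt ℝ F (s, y)) :
    deriv (fun s' => F (s', y)) s = DT F (s, y) := by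
  have h : HasFDerivAt (fun s' => F (s', y))
      ((fderiv ℝ F (s, y)).comp (ContinuousLinearMap.inl ℝ ℝ (Fin n → ℝ))) s :=
    hF.hasFDerivAt.comp s (hasFDerivAt_prodMk_left s y)
  rw [h.hasDerivAt.deriv]
  simp [DT]

lemma PDa_contDiff {a : Fin n} {F : ℝ × (Fin n → ℝ) → ℝ} (hF : ContDiff ℝ (⊤ : ℕ∞) F) :
    ContDiff ℝ (⊤ : ℕ∞) (PDa a F) :=
  (hF.fderiv_right (le_refl _)).clm_apply contDiff_const

lemma DT_contDiff {F : ℝ × (Fin n → ℝ) → ℝ} (hF : ContDiff ℝ (⊤ : ℕ∞) F) :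
    ContDiff ℝ (⊤ : ℕ∞) (DT F) :=
  (hF.fderiv_right (le_refl _)).clm_apply contDiff_const

end infra

section comm
variable {n : ℕ}

lemma fderiv_fderiv_apply {E : Type*} [NormedAddCommGroup E] [NormedSpace ℝ E]
    {F : E → ℝ} {p u w : E} (hF : DifferentiableAt ℝ (fderiv ℝ F) p) :
    fderiv ℝ (fun q => fderiv ℝ F q w) p u = fderiv ℝ (fderiv ℝ F) p u w := by
  rw [fderiv_clm_apply hF (differentiableAt_const w)]
  simp

lemma sym_snd {E : Type*} [NormedAddCommGroup E] [NormedSpace ℝ E]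
    {F : E → ℝ} (hF : ContDiff ℝ (⊤ : ℕ∞) F) (p u w : E) :
    fderiv ℝ (fderiv ℝ F) p u w = fderiv ℝ (fderiv ℝ F) p w u :=
  (hF.contDiffAt.isSymmSndFDerivAt (by rw [minSmoothness_of_isRCLikeNormedField]; exact WithTop.coe_le_coe.mpr le_top)) u w

lemma deriv_pd_comm {a : Fin n} {F : ℝ × (Fin n → ℝ) → ℝ} (hF : ContDiff ℝ (⊤ : ℕ∞) F)
    (t : ℝ) (y : Fin n → ℝ) :
    deriv (fun s => pd a (fun z => F (s, z)) y) t =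
      pd a (fun z => deriv (fun s => F (s, z)) t) y := by
  have hFd : Differentiable ℝ F := hF.differentiable (by simp)
  have hF' : Differentiable ℝ (fderiv ℝ F) :=
    (hF.fderiv_right (m := (⊤ : ℕ∞)) (le_refl _)).differentiable (by simp)
  have h1 : (fun s => pd a (fun z => F (s, z)) y) = fun s => PDa a F (s, y) :=
    funext fun s => pd_eq_PDa (hFd _)
  have h2 : (fun z => deriv (fun s => F (s, z)) t) = fun z => DT F (t, z) :=
    funext fun z => deriv_eq_DT (hFd _)
  rw [h1, h2, deriv_eq_DT ((PDa_contDiff hF).differentiable (by simp) _),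
    pd_eq_PDa ((DT_contDiff hF).differentiable (by simp) _)]
  unfold PDa DT
  rw [fderiv_fderiv_apply (hF' _), fderiv_fderiv_apply (hF' _), sym_snd hF]

lemma pd_pd_comm {a c : Fin n} {f : (Fin n → ℝ) → ℝ} (hf : ContDiff ℝ (⊤ : ℕ∞) f)
    (y : Fin n → ℝ) :
    pd a (fun z => pd c f z) y = pd c (fun z => pd a f z) y := by
  have hf' : Differentiable ℝ (fderiv ℝ f) :=
    (hf.fderiv_right (m := (⊤ : ℕ∞)) (le_refl _)).differentiable (by simp)
  unfold pd
  rw [fderiv_fderiv_apply (hf' _), fderiv_fderiv_apply (hf' _), sym_snd hf]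

end comm

section fields
variable {n : ℕ} (x v : ℝ → (Fin n → ℝ) → (Fin n → ℝ))

/-- component of flow map as joint function -/
def Xj (j : Fin n) : ℝ × (Fin n → ℝ) → ℝ := fun q => x q.1 q.2 j

/-- Eulerian velocity along the flow, jointly -/
def VV (j : Fin n) : ℝ × (Fin n → ℝ) → ℝ := fun q => v q.1 (x q.1 q.2) j

/-- Lagrangian one-form, jointly -/
def UU (a : Fin n) : ℝ × (Fin n → ℝ) → ℝ :=
  fun q => ∑ j, PDa a (Xj x j) q * VV x v j q

variable {x v}
variable (hx : ContDiff ℝ (⊤ : ℕ∞) (fun q : ℝ × (Fin n → ℝ) => x q.1 q.2))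
    (hv : ContDiff ℝ (⊤ : ℕ∞) (fun q : ℝ × (Fin n → ℝ) => v q.1 q.2))

include hx in
lemma Xj_contDiff (j : Fin n) : ContDiff ℝ (⊤ : ℕ∞) (Xj x j) := by
  have := (contDiff_pi.mp hx) j; exact this

include hx hv in
lemma VV_contDiff (j : Fin n) : ContDiff ℝ (⊤ : ℕ∞) (VV x v j) := by
  have h1 : ContDiff ℝ (⊤ : ℕ∞) (fun q : ℝ × (Fin n → ℝ) => (q.1, x q.1 q.2)) :=
    contDiff_fst.prodMk hx
  exact (contDiff_pi.mp (hv.comp h1)) j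

include hx hv in
lemma UU_contDiff (a : Fin n) : ContDiff ℝ (⊤ : ℕ∞) (UU x v a) :=
  ContDiff.sum fun j _ => (PDa_contDiff (Xj_contDiff hx j)).mul (VV_contDiff hx hv j)

include hx in
lemma uLag_eq_UU (s : ℝ) (z : Fin n → ℝ) (a : Fin n) : uLag x v s z a = UU x v a (s, z) := by
  unfold uLag UU
  refine Finset.sum_congr rfl fun j _ => ?_
  rw [show (fun z => x s z j) = fun z => Xj x j (s, z) from rfl,
    pd_eq_PDa ((Xj_contDiff hx j).differentiable (by simp) _)]
  rfl

end fields

section alg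
variable {n : ℕ} {x v : ℝ → (Fin n → ℝ) → (Fin n → ℝ)}
  {g : ℝ → (Fin n → ℝ) → Matrix (Fin n) (Fin n) ℝ}

lemma covD_scal (t : ℝ) (f : (Fin n → ℝ) → ℝ) (y : Fin n → ℝ) (a : Fin n) :
    covD g t (scalT f) y ![a] = pd a f y := by
  simp [covD, scalT]

lemma covD_one (t : ℝ) (y : Fin n → ℝ) (a b : Fin n) :
    covD g t (uT x v t) y ![a, b] =
      pd a (fun z => uLag x v t z b) y - ∑ e, Gamma g t y e a b * uLag x v t y e := by
  simp [covD, uT, Fin.sum_univ_one, Fin.tail, Matrix.cons_val_one]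

lemma gmat_symm (t : ℝ) (z : Fin n → ℝ) (a b : Fin n) :
    gmat x t z a b = gmat x t z b a := by
  simp [gmat, mul_comm]

lemma Gamma_symm (t : ℝ) (y : Fin n → ℝ) (e a b : Fin n) :
    Gamma (gmat x) t y e a b = Gamma (gmat x) t y e b a := by
  unfold Gamma
  congr 1
  refine Finset.sum_congr rfl fun d _ => ?_
  rw [pd_congr (fun z => gmat_symm t z a b) y]
  ring

lemma curl_eq (t : ℝ) (y : Fin n → ℝ) (a b : Fin n) :
    covD (gmat x) t (uT x v t) y ![a, b] - covD (gmat x) t (uT x v t) y ![b, a] =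
      pd a (fun z => uLag x v t z b) y - pd b (fun z => uLag x v t z a) y := by
  rw [covD_one, covD_one]
  have : ∑ e, Gamma (gmat x) t y e a b * uLag x v t y e =
      ∑ e, Gamma (gmat x) t y e b a * uLag x v t y e :=
    Finset.sum_congr rfl fun e _ => by rw [Gamma_symm]
  rw [this]; ring

end alg

section matrixkey
open Matrix
variable {n : ℕ}

lemma key_matrix (A : Matrix (Fin n) (Fin n) ℝ) (hA : IsUnit A.det) :
    Aᵀ * (A * Aᵀ)⁻¹ * A = 1 := by
  have hAT : IsUnit Aᵀ.det := by rwa [Matrix.det_transpose]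
  rw [Matrix.mul_inv_rev, ← mul_assoc, mul_assoc Aᵀ, ← mul_assoc Aᵀ,
    Matrix.mul_nonsing_inv _ hAT, one_mul, Matrix.nonsing_inv_mul _ hA]

lemma contract (A G : Matrix (Fin n) (Fin n) ℝ) (hG : G = A * Aᵀ) (hA : IsUnit A.det)
    (s V : Fin n → ℝ) :
    ∑ e, ∑ d, G⁻¹ e d * (∑ j, A e j * s j) * (∑ k, A d k * V k) = ∑ j, s j * V j := by
  have h1 : ∀ e, (∑ j, A e j * s j) = A.mulVec s e := fun e => rfl
  have h2 : ∀ d, (∑ k, A d k * V k) = A.mulVec V d := fun d => rfl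
  calc ∑ e, ∑ d, G⁻¹ e d * (∑ j, A e j * s j) * (∑ k, A d k * V k)
      = ∑ e, A.mulVec s e * ∑ d, G⁻¹ e d * A.mulVec V d := by
        refine Finset.sum_congr rfl fun e _ => ?_
        rw [Finset.mul_sum]
        refine Finset.sum_congr rfl fun d _ => by rw [h1, h2]; ring
    _ = A.mulVec s ⬝ᵥ G⁻¹.mulVec (A.mulVec V) := rfl
    _ = ∑ j, s j * V j := by
        rw [Matrix.mulVec_mulVec, ← Matrix.vecMul_transpose, Matrix.dotProduct_mulVec,
          Matrix.vecMul_vecMul, ← Matrix.transpose_transpose (Aᵀ * (G⁻¹ * A)),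
          ← Matrix.mulVec_transpose]
        rw [show (Aᵀ * (G⁻¹ * A)) = 1 by rw [hG, ← mul_assoc]; exact key_matrix A hA]
        simp [dotProduct]

end matrixkey

section core
variable {n : ℕ} (x v : ℝ → (Fin n → ℝ) → (Fin n → ℝ)) (t : ℝ)

def At (c j : Fin n) : (Fin n → ℝ) → ℝ := fun z => pd c (fun z' => x t z' j) z
def Vt (j : Fin n) : (Fin n → ℝ) → ℝ := fun z => v t (x t z) j

variable {x v}
variable (hx : ContDiff ℝ (⊤ : ℕ∞) (fun q : ℝ × (Fin n → ℝ) => x q.1 q.2))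
    (hv : ContDiff ℝ (⊤ : ℕ∞) (fun q : ℝ × (Fin n → ℝ) => v q.1 q.2))

lemma slice_contDiff {F : ℝ × (Fin n → ℝ) → ℝ} (hF : ContDiff ℝ (⊤ : ℕ∞) F) :
    ContDiff ℝ (⊤ : ℕ∞) (fun z : Fin n → ℝ => F (t, z)) :=
  hF.comp (contDiff_const.prodMk contDiff_id)

include hx in
lemma At_eq (c j : Fin n) : At x t c j = fun z => PDa c (Xj x j) (t, z) :=
  funext fun z => pd_eq_PDa ((Xj_contDiff hx j).differentiable (by simp) _)

include hx in
lemma At_contDiff (c j : Fin n) : ContDiff ℝ (⊤ : ℕ∞) (At x t c j) := by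
  rw [At_eq t hx]; exact slice_contDiff t (PDa_contDiff (Xj_contDiff hx j))

include hx hv in
lemma Vt_contDiff (j : Fin n) : ContDiff ℝ (⊤ : ℕ∞) (Vt x v t j) :=
  slice_contDiff t (VV_contDiff hx hv j)

include hx hv in
lemma Wt_eq (c j : Fin n) :
    (fun z => pd c (Vt x v t j) z) = fun z => PDa c (VV x v j) (t, z) :=
  funext fun z => pd_eq_PDa ((VV_contDiff hx hv j).differentiable (by simp) _)

include hx hv in
lemma Wt_contDiff (c j : Fin n) : ContDiff ℝ (⊤ : ℕ∞) (fun z => pd c (Vt x v t j) z) := by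
  rw [Wt_eq t hx hv]; exact slice_contDiff t (PDa_contDiff (VV_contDiff hx hv j))

include hx in
lemma xt_contDiff (j : Fin n) : ContDiff ℝ (⊤ : ℕ∞) (fun z => x t z j) :=
  slice_contDiff t (Xj_contDiff hx j)

include hx in
lemma St_symm (a c j : Fin n) (z : Fin n → ℝ) :
    pd a (At x t c j) z = pd c (At x t a j) z := by
  unfold At
  exact pd_pd_comm (xt_contDiff t hx j) z

-- (L1) derivative of the metric
include hx in
lemma pd_gmat (a c d : Fin n) (z : Fin n → ℝ) :
    pd a (fun z' => gmat x t z' c d) z =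
      ∑ j, (pd a (At x t c j) z * At x t d j z + At x t c j z * pd a (At x t d j) z) := by
  have h : (fun z' => gmat x t z' c d) = fun z' => ∑ j, At x t c j z' * At x t d j z' := rfl
  rw [h, pd_sum _ (f := fun j z' => At x t c j z' * At x t d j z') (fun j _ => ((At_contDiff t hx c j).differentiable (by simp) z).mul
    ((At_contDiff t hx d j).differentiable (by simp) z))]
  exact Finset.sum_congr rfl fun j _ => pd_mul
    ((At_contDiff t hx c j).differentiable (by simp) z)
    ((At_contDiff t hx d j).differentiable (by simp) z)

-- (L3) derivative of uLag
include hx hv in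
lemma pd_uLag (a c : Fin n) (z : Fin n → ℝ) :
    pd a (fun z' => uLag x v t z' c) z =
      ∑ j, (pd a (At x t c j) z * Vt x v t j z + At x t c j z * pd a (Vt x v t j) z) := by
  have h : (fun z' => uLag x v t z' c) = fun z' => ∑ j, At x t c j z' * Vt x v t j z' := rfl
  rw [h, pd_sum _ (f := fun j z' => At x t c j z' * Vt x v t j z') (fun j _ => ((At_contDiff t hx c j).differentiable (by simp) z).mul
    ((Vt_contDiff t hx hv j).differentiable (by simp) z))]
  exact Finset.sum_congr rfl fun j _ => pd_mul
    ((At_contDiff t hx c j).differentiable (by simp) z)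
    ((Vt_contDiff t hx hv j).differentiable (by simp) z)

-- (L4) Christoffel symbols of the induced metric
include hx in
lemma Gamma_gmat (e c c' : Fin n) (z : Fin n → ℝ) :
    Gamma (gmat x) t z e c c' =
      ∑ d, (gmat x t z)⁻¹ e d * ∑ j, pd c (At x t c' j) z * At x t d j z := by
  unfold Gamma
  rw [Finset.mul_sum]
  refine Finset.sum_congr rfl fun d _ => ?_
  rw [pd_gmat t hx c c' d z, pd_gmat t hx c' c d z, pd_gmat t hx d c c' z]
  have h1 : ∀ j : Fin n, pd c' (At x t c j) z = pd c (At x t c' j) z :=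
    fun j => St_symm t hx c' c j z
  have h2 : ∀ j : Fin n, pd d (At x t c j) z = pd c (At x t d j) z :=
    fun j => St_symm t hx d c j z
  have h3 : ∀ j : Fin n, pd d (At x t c' j) z = pd c' (At x t d j) z :=
    fun j => St_symm t hx d c' j z
  have hT : ((∑ j, (pd c (At x t c' j) z * At x t d j z + At x t c' j z * pd c (At x t d j) z)) +
      (∑ j, (pd c' (At x t c j) z * At x t d j z + At x t c j z * pd c' (At x t d j) z)) -
      (∑ j, (pd d (At x t c j) z * At x t c' j z + At x t c j z * pd d (At x t c' j) z))) =
      2 * ∑ j, pd c (At x t c' j) z * At x t d j z := by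
    rw [← Finset.sum_add_distrib, ← Finset.sum_sub_distrib, Finset.mul_sum]
    refine Finset.sum_congr rfl fun j _ => ?_
    rw [h1 j, h2 j, h3 j]; ring
  rw [hT]; ring

end core

section core2
open Matrix
variable {n : ℕ} {x v : ℝ → (Fin n → ℝ) → (Fin n → ℝ)} (t : ℝ)
variable (hx : ContDiff ℝ (⊤ : ℕ∞) (fun q : ℝ × (Fin n → ℝ) => x q.1 q.2))
    (hv : ContDiff ℝ (⊤ : ℕ∞) (fun q : ℝ × (Fin n → ℝ) => v q.1 q.2))

/-- The Jacobian matrix of the flow at fixed time. -/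
def AM (x : ℝ → (Fin n → ℝ) → (Fin n → ℝ)) (t : ℝ) (z : Fin n → ℝ) :
    Matrix (Fin n) (Fin n) ℝ := Matrix.of fun e j => At x t e j z

lemma gmat_eq_AM (z : Fin n → ℝ) : gmat x t z = AM x t z * (AM x t z)ᵀ := by
  ext a b
  simp [gmat, AM, At, Matrix.mul_apply]

lemma AM_det (z : Fin n → ℝ) (hdet : IsUnit (gmat x t z).det) : IsUnit (AM x t z).det := by
  rw [gmat_eq_AM, Matrix.det_mul, Matrix.det_transpose] at hdet
  exact isUnit_of_mul_isUnit_left hdet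

lemma uLag_eq_At (z : Fin n → ℝ) (e : Fin n) :
    uLag x v t z e = ∑ k, At x t e k z * Vt x v t k z := rfl

-- (L5) the covariant derivative of u in terms of Eulerian quantities
include hx hv in
lemma covD_u_eq (z : Fin n → ℝ) (hdet : IsUnit (gmat x t z).det) (c c' : Fin n) :
    covD (gmat x) t (uT x v t) z ![c, c'] =
      ∑ j, At x t c' j z * pd c (Vt x v t j) z := by
  rw [covD_one, pd_uLag t hx hv c c' z]
  have hG : ∑ e, Gamma (gmat x) t z e c c' * uLag x v t z e =
      ∑ j, Vt x v t j z * pd c (At x t c' j) z := by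
    calc ∑ e, Gamma (gmat x) t z e c c' * uLag x v t z e
        = ∑ e, ∑ d, (gmat x t z)⁻¹ e d * (∑ j, AM x t z e j * Vt x v t j z) *
            (∑ k, AM x t z d k * pd c (At x t c' k) z) := by
          refine Finset.sum_congr rfl fun e _ => ?_
          rw [Gamma_gmat t hx e c c' z, Finset.sum_mul]
          refine Finset.sum_congr rfl fun d _ => ?_
          rw [uLag_eq_At]
          have h1 : (∑ j, pd c (At x t c' j) z * At x t d j z) =
              ∑ k, AM x t z d k * pd c (At x t c' k) z :=
            Finset.sum_congr rfl fun j _ => by rw [mul_comm]; rfl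
          have h2 : (∑ k, At x t e k z * Vt x v t k z) =
              ∑ j, AM x t z e j * Vt x v t j z := rfl
          rw [h1, h2]; ring
      _ = ∑ j, Vt x v t j z * pd c (At x t c' j) z :=
          contract (AM x t z) (gmat x t z) (gmat_eq_AM t z) (AM_det t z hdet) _ _
  rw [hG, ← Finset.sum_sub_distrib]
  exact Finset.sum_congr rfl fun j _ => by ring

-- (L7) the quadratic term is an Eulerian gradient
include hx hv in
lemma R_eq (z : Fin n → ℝ) (hdet : IsUnit (gmat x t z).det) (c : Fin n) :
    (∑ c', ∑ d, covD (gmat x) t (uT x v t) z ![c, c'] *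
        (gmat x t z)⁻¹ c' d * uLag x v t z d) =
      ∑ j, pd c (Vt x v t j) z * Vt x v t j z := by
  calc (∑ c', ∑ d, covD (gmat x) t (uT x v t) z ![c, c'] *
        (gmat x t z)⁻¹ c' d * uLag x v t z d)
      = ∑ c', ∑ d, (gmat x t z)⁻¹ c' d *
          (∑ j, AM x t z c' j * pd c (Vt x v t j) z) *
          (∑ k, AM x t z d k * Vt x v t k z) := by
        refine Finset.sum_congr rfl fun c' _ => Finset.sum_congr rfl fun d _ => ?_
        rw [covD_u_eq t hx hv z hdet c c', uLag_eq_At]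
        have h1 : (∑ j, At x t c' j z * pd c (Vt x v t j) z) =
            ∑ j, AM x t z c' j * pd c (Vt x v t j) z := rfl
        have h2 : (∑ k, At x t d k z * Vt x v t k z) =
            ∑ k, AM x t z d k * Vt x v t k z := rfl
        rw [h1, h2]; ring
    _ = ∑ j, pd c (Vt x v t j) z * Vt x v t j z :=
        contract (AM x t z) (gmat x t z) (gmat_eq_AM t z) (AM_det t z hdet) _ _

end core2

section final
variable {n : ℕ}

lemma pd_neg {a : Fin n} (f : (Fin n → ℝ) → ℝ) (y : Fin n → ℝ) :
    pd a (fun z => -f z) y = -pd a f y := by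
  simp [pd, fderiv_neg]

theorem stmt12' {n : ℕ} (x v : ℝ → (Fin n → ℝ) → (Fin n → ℝ))
    (𝒯 p : ℝ → (Fin n → ℝ) → ℝ)
    (hx : ContDiff ℝ (⊤ : ℕ∞) (fun q : ℝ × (Fin n → ℝ) => x q.1 q.2))
    (hv : ContDiff ℝ (⊤ : ℕ∞) (fun q : ℝ × (Fin n → ℝ) => v q.1 q.2))
    (h𝒯 : ContDiff ℝ (⊤ : ℕ∞) (fun q : ℝ × (Fin n → ℝ) => 𝒯 q.1 q.2))
    (hp : ContDiff ℝ (⊤ : ℕ∞) (fun q : ℝ × (Fin n → ℝ) => p q.1 q.2))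
    (hflow : ∀ t y, HasDerivAt (fun s => x s y) (v t (x t y)) t)
    (hdet : ∀ t y, IsUnit (gmat x t y).det)
    (hmom : ∀ t y (a : Fin n),
      deriv (fun s => uLag x v s y a) t +
          𝒯 t y * covD (gmat x) t (scalT (p t)) y ![a] =
        ∑ c, ∑ d, covD (gmat x) t (uT x v t) y ![a, c] *
          (gmat x t y)⁻¹ c d * uLag x v t y d) :
    ∀ t (y : Fin n → ℝ) (a b : Fin n),
      deriv (fun s =>
          covD (gmat x) s (uT x v s) y ![a, b] -
            covD (gmat x) s (uT x v s) y ![b, a]) t =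
        covD (gmat x) t (scalT (𝒯 t)) y ![b] * covD (gmat x) t (scalT (p t)) y ![a] -
          covD (gmat x) t (scalT (𝒯 t)) y ![a] * covD (gmat x) t (scalT (p t)) y ![b] := by
  intro t y a b
  -- spatial slices
  have hTt : ContDiff ℝ (⊤ : ℕ∞) (fun z => 𝒯 t z) := slice_contDiff t h𝒯
  have hpt : ContDiff ℝ (⊤ : ℕ∞) (fun z => p t z) := slice_contDiff t hp
  -- the pressure-derivative field
  have hPB : ∀ c : Fin n, (fun z => pd c (p t) z) =
      fun z => PDa c (fun q : ℝ × (Fin n → ℝ) => p q.1 q.2) (t, z) :=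
    fun c => funext fun z => pd_eq_PDa (hp.differentiable (by simp) _)
  have hPBc : ∀ c : Fin n, ContDiff ℝ (⊤ : ℕ∞) (fun z => pd c (p t) z) := fun c => by
    rw [hPB c]; exact slice_contDiff t (PDa_contDiff hp)
  -- the momentum-equation right-hand side as a function of z
  set D : Fin n → (Fin n → ℝ) → ℝ := fun c z =>
    -(𝒯 t z * pd c (p t) z) + ∑ j, pd c (Vt x v t j) z * Vt x v t j z with hD
  have hderivU : ∀ (c : Fin n) (z : Fin n → ℝ),
      deriv (fun s => UU x v c (s, z)) t = D c z := by
    intro c z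
    have h1 : (fun s => UU x v c (s, z)) = fun s => uLag x v s z c :=
      funext fun s => (uLag_eq_UU hx s z c).symm
    have h2 := hmom t z c
    rw [covD_scal, R_eq t hx hv z (hdet t z) c] at h2
    rw [h1, hD]
    dsimp only
    linarith
  -- differentiability in time
  have hUs : ∀ (c : Fin n), ContDiff ℝ (⊤ : ℕ∞) (fun s => PDa c (UU x v c) (s, y)) := by
    intro c
    exact (PDa_contDiff (UU_contDiff hx hv c)).comp (contDiff_id.prodMk contDiff_const)
  have htime : ∀ c c' : Fin n,
      (fun s => pd c (fun z => uLag x v s z c') y) =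
        fun s => PDa c (UU x v c') (s, y) := by
    intro c c'
    refine funext fun s => ?_
    rw [pd_congr (fun z => uLag_eq_UU hx s z c') y]
    exact pd_eq_PDa ((UU_contDiff hx hv c').differentiable (by simp) _)
  have hdiff : ∀ c c' : Fin n,
      DifferentiableAt ℝ (fun s => pd c (fun z => uLag x v s z c') y) t := by
    intro c c'
    rw [htime c c']
    exact (((PDa_contDiff (UU_contDiff hx hv c')).comp
      (contDiff_id.prodMk contDiff_const)).differentiable (by simp)) t
  -- Step 1: drop the Christoffel symbols
  have step1 : (fun s =>
      covD (gmat x) s (uT x v s) y ![a, b] - covD (gmat x) s (uT x v s) y ![b, a]) =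
      fun s => pd a (fun z => uLag x v s z b) y - pd b (fun z => uLag x v s z a) y :=
    funext fun s => curl_eq s y a b
  rw [step1, deriv_fun_sub (hdiff a b) (hdiff b a)]
  -- Step 2: commute time and space derivatives
  have comm : ∀ c c' : Fin n,
      deriv (fun s => pd c (fun z => uLag x v s z c') y) t = pd c (D c') y := by
    intro c c'
    have h1 : (fun s => pd c (fun z => uLag x v s z c') y) =
        fun s => pd c (fun z => UU x v c' (s, z)) y :=
      funext fun s => pd_congr (fun z => uLag_eq_UU hx s z c') y
    rw [h1, deriv_pd_comm (UU_contDiff hx hv c') t y]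
    exact pd_congr (fun z => hderivU c' z) y
  rw [comm a b, comm b a]
  -- Step 3: expand the derivatives of D
  have hRdiff : ∀ c : Fin n, ∀ z, DifferentiableAt ℝ
      (fun z' => ∑ j, pd c (Vt x v t j) z' * Vt x v t j z') z := by
    intro c z
    exact DifferentiableAt.fun_sum fun j _ =>
      ((Wt_contDiff t hx hv c j).differentiable (by simp) z).mul
        ((Vt_contDiff t hx hv j).differentiable (by simp) z)
  have expand : ∀ c c' : Fin n, pd c (D c') y =
      -(pd c (fun z => 𝒯 t z) y * pd c' (p t) y +
        𝒯 t y * pd c (fun z => pd c' (p t) z) y) +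
      pd c (fun z => ∑ j, pd c' (Vt x v t j) z * Vt x v t j z) y := by
    intro c c'
    rw [hD]
    rw [pd_add (by
        exact (((hTt.differentiable (by simp) y).mul
          ((hPBc c').differentiable (by simp) y)).neg)
      ) (hRdiff c' y)]
    congr 1
    rw [show (fun z => -(𝒯 t z * pd c' (p t) z)) =
        fun z => -((fun z' => 𝒯 t z') z * (fun z' => pd c' (p t) z') z) from rfl]
    rw [pd_neg, pd_mul (hTt.differentiable (by simp) y) ((hPBc c').differentiable (by simp) y)]
  rw [expand a b, expand b a]
  -- Step 4: the two symmetric pieces cancel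
  have symP : pd a (fun z => pd b (p t) z) y = pd b (fun z => pd a (p t) z) y := by
    have := pd_pd_comm (a := a) (c := b) hpt y
    simpa [pd] using this
  have symR : pd a (fun z => ∑ j, pd b (Vt x v t j) z * Vt x v t j z) y =
      pd b (fun z => ∑ j, pd a (Vt x v t j) z * Vt x v t j z) y := by
    have hQ : ContDiff ℝ (⊤ : ℕ∞) (fun z => ∑ j, Vt x v t j z * Vt x v t j z) :=
      ContDiff.sum fun j _ => (Vt_contDiff t hx hv j).mul (Vt_contDiff t hx hv j)
    have hhalf : ∀ c : Fin n, ∀ z, (∑ j, pd c (Vt x v t j) z * Vt x v t j z) =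
        (1/2) * pd c (fun z' => ∑ j, Vt x v t j z' * Vt x v t j z') z := by
      intro c z
      rw [pd_sum _ (f := fun j z' => Vt x v t j z' * Vt x v t j z') (fun j _ => ((Vt_contDiff t hx hv j).differentiable (by simp) z).mul
        ((Vt_contDiff t hx hv j).differentiable (by simp) z)),
        Finset.mul_sum]
      refine Finset.sum_congr rfl fun j _ => ?_
      rw [pd_mul ((Vt_contDiff t hx hv j).differentiable (by simp) z)
        ((Vt_contDiff t hx hv j).differentiable (by simp) z)]
      ring
    have hQc : ∀ c : Fin n, ContDiff ℝ (⊤ : ℕ∞)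
        (fun z => pd c (fun z' => ∑ j, Vt x v t j z' * Vt x v t j z') z) := by
      intro c
      rw [show (fun z => pd c (fun z' => ∑ j, Vt x v t j z' * Vt x v t j z') z) =
          fun z => PDa c (fun q : ℝ × (Fin n → ℝ) =>
            ∑ j, VV x v j q * VV x v j q) (t, z) from funext fun z => pd_eq_PDa
            ((ContDiff.sum fun j _ =>
              (VV_contDiff hx hv j).mul (VV_contDiff hx hv j)).differentiable (by simp) _)]
      exact slice_contDiff t (PDa_contDiff
        (ContDiff.sum fun j _ => (VV_contDiff hx hv j).mul (VV_contDiff hx hv j)))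
    rw [pd_congr (hhalf b) y, pd_congr (hhalf a) y]
    have hcm : ∀ c c' : Fin n, pd c (fun z => (1/2 : ℝ) *
        pd c' (fun z' => ∑ j, Vt x v t j z' * Vt x v t j z') z) y =
        (1/2 : ℝ) * pd c (fun z => pd c' (fun z' =>
          ∑ j, Vt x v t j z' * Vt x v t j z') z) y := by
      intro c c'
      exact pd_const_mul ((hQc c').differentiable (by simp) y)
    rw [hcm, hcm, pd_pd_comm hQ y]
  rw [covD_scal, covD_scal, covD_scal, covD_scal, symP, symR]
  ring

end final

/-- for a smooth solution of `D_t u_a + 𝒯∇_a p = (∇_a u_c)u^c` in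
Lagrangian coordinates, the vorticity two-form `curl u_{ab} = ∇_a u_b - ∇_b u_a`
satisfies `D_t(curl u)_{ab} = (∇_b 𝒯)(∇_a p) - (∇_a 𝒯)(∇_b p)`. -/
theorem stmt12 {n : ℕ} (x v : ℝ → (Fin n → ℝ) → (Fin n → ℝ))
    (𝒯 p : ℝ → (Fin n → ℝ) → ℝ)
    (hx : ContDiff ℝ (⊤ : ℕ∞) (fun q : ℝ × (Fin n → ℝ) => x q.1 q.2))
    (hv : ContDiff ℝ (⊤ : ℕ∞) (fun q : ℝ × (Fin n → ℝ) => v q.1 q.2))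
    (h𝒯 : ContDiff ℝ (⊤ : ℕ∞) (fun q : ℝ × (Fin n → ℝ) => 𝒯 q.1 q.2))
    (hp : ContDiff ℝ (⊤ : ℕ∞) (fun q : ℝ × (Fin n → ℝ) => p q.1 q.2))
    (hflow : ∀ t y, HasDerivAt (fun s => x s y) (v t (x t y)) t)
    (hdet : ∀ t y, IsUnit (gmat x t y).det)
    (hmom : ∀ t y (a : Fin n),
      deriv (fun s => uLag x v s y a) t +
          𝒯 t y * covD (gmat x) t (scalT (p t)) y ![a] =
        ∑ c, ∑ d, covD (gmat x) t (uT x v t) y ![a, c] *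
          (gmat x t y)⁻¹ c d * uLag x v t y d) :
    ∀ t (y : Fin n → ℝ) (a b : Fin n),
      deriv (fun s =>
          covD (gmat x) s (uT x v s) y ![a, b] -
            covD (gmat x) s (uT x v s) y ![b, a]) t =
        covD (gmat x) t (scalT (𝒯 t)) y ![b] * covD (gmat x) t (scalT (p t)) y ![a] -
          covD (gmat x) t (scalT (𝒯 t)) y ![a] * covD (gmat x) t (scalT (p t)) y ![b] := by
  exact stmt12' x v 𝒯 p hx hv h𝒯 hp hflow hdet hmom
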